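/- arXiv:2512.05319 — 3 statements merged into one kernel-verified Lean document; each statement's English description precedes it below -/
import Mathlib

section
/- Let Σ be a finite abstract simplicial complex on a linearly ordered vertex set and k ≥ 0 with deg σ > 0 for all σ ∈ Σ_k. Then every eigenvalue μ of the normalized up-Laplacian Δ_k^up satisfies 0 ≤ μ ≤ k + 2. -/
open scoped BigOperators

/-- A finite abstract simplicial complex: a collection of nonempty finite vertex sets closed
under taking nonempty subsets. -/
def IsSimplicialComplex {U : Type*} [LinearOrder U] (K : Finset (Finset U)) : Prop :=
  (∀ σ ∈ K, σ.Nonempty) ∧ ∀ τ ∈ K, ∀ σ ⊆ τ, σ.Nonempty → σ ∈ K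

/-- The set `Σ_k` of `k`-simplices (sets of `k+1` vertices) of `K`. -/
def faces {U : Type*} [LinearOrder U] (K : Finset (Finset U)) (k : ℕ) : Finset (Finset U) :=
  K.filter fun σ => σ.card = k + 1

/-- The degree of a simplex `σ`: the number of cofacets of `σ` in `K`. -/
def degS {U : Type*} [LinearOrder U] (K : Finset (Finset U)) (σ : Finset U) : ℕ :=
  (K.filter fun τ => σ ⊆ τ ∧ τ.card = σ.card + 1).card

/-- The incidence sign `sgn([σ], ∂[τ]) = (−1)^i` when the vertex of `τ` missing from `σ` is the
`(i+1)`-st smallest vertex of `τ` (and `0` if `τ ∖ σ` is not a singleton). -/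
def sgnZ {U : Type*} [LinearOrder U] (σ τ : Finset U) : ℤ :=
  ∑ v ∈ τ \ σ, (-1 : ℤ) ^ (τ.filter fun x => x < v).card

/-- The matrix of the normalized up-Laplacian `Δ_k^up` acting on `k`-cochains:
`(Δ_k^up f)(σ) = f(σ) + (1/deg σ) Σ_{σ'≠σ, common cofacet τ} sgn([σ],∂[τ]) sgn([σ'],∂[τ]) f(σ')`
(each pair of distinct `k`-simplices has at most one common cofacet `τ ∈ Σ_{k+1}`). -/
noncomputable def upLapMatrix {U : Type*} [LinearOrder U] (K : Finset (Finset U)) (k : ℕ) :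
    Matrix {σ // σ ∈ faces K k} {σ // σ ∈ faces K k} ℝ :=
  fun σ σ' =>
    if σ = σ' then 1
    else (degS K σ.1 : ℝ)⁻¹ *
      ∑ τ ∈ K.filter (fun τ => τ.card = k + 2 ∧ σ.1 ⊆ τ ∧ σ'.1 ⊆ τ),
        (sgnZ σ.1 τ : ℝ) * (sgnZ σ'.1 τ : ℝ)

lemma sgnZ_sq {U : Type*} [LinearOrder U] {σ τ : Finset U} (hsub : σ ⊆ τ)
    (hcard : τ.card = σ.card + 1) : (sgnZ σ τ) ^ 2 = 1 := by
  have h1 : (τ \ σ).card = 1 := by rw [Finset.card_sdiff_of_subset hsub, hcard]; omega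
  obtain ⟨w, hw⟩ := Finset.card_eq_one.mp h1
  rw [sgnZ, hw, Finset.sum_singleton, ← pow_mul, mul_comm, pow_mul, neg_one_sq, one_pow]

/-- Every eigenvalue `μ` of the normalized up-Laplacian `Δ_k^up` of a finite simplicial complex
with `deg σ > 0` for all `σ ∈ Σ_k` satisfies `0 ≤ μ ≤ k + 2`. -/
theorem stmt14 {U : Type*} [LinearOrder U] (K : Finset (Finset U))
    (hK : IsSimplicialComplex K) (k : ℕ)
    (hdeg : ∀ σ ∈ faces K k, 0 < degS K σ)
    (μ : ℝ) (hμ : Module.End.HasEigenvalue (upLapMatrix K k).mulVecLin μ) :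
    0 ≤ μ ∧ μ ≤ (k : ℝ) + 2 := by
  classical
  obtain ⟨v, hv⟩ := hμ.exists_hasEigenvector
  have hvec : ∀ σ, (upLapMatrix K k).mulVec v σ = μ * v σ := by
    intro σ
    have h := Module.End.mem_eigenspace_iff.mp hv.1
    have : (upLapMatrix K k).mulVec v = μ • v := by
      simpa [Matrix.mulVecLin_apply] using h
    rw [this]; rfl
  have hv0 : v ≠ 0 := hv.2
  set cof : Finset (Finset U) := K.filter (fun τ => τ.card = k + 2) with hcof
  set b : {σ // σ ∈ faces K k} → Finset U → ℝ :=
    fun σ τ => if σ.1 ⊆ τ then (sgnZ σ.1 τ : ℝ) else 0 with hb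
  have hcardσ : ∀ σ : {σ // σ ∈ faces K k}, σ.1.card = k + 1 :=
    fun σ => (Finset.mem_filter.mp σ.2).2
  -- b squared is the containment indicator
  have hbsq : ∀ (σ : {σ // σ ∈ faces K k}), ∀ τ ∈ cof,
      (b σ τ) ^ 2 = if σ.1 ⊆ τ then 1 else 0 := by
    intro σ τ hτ
    rw [hb]
    by_cases h : σ.1 ⊆ τ
    · simp only [h, if_true]
      have hs : (sgnZ σ.1 τ) ^ 2 = 1 := by
        refine sgnZ_sq h ?_
        rw [hcardσ σ]
        exact (Finset.mem_filter.mp hτ).2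
      have : ((sgnZ σ.1 τ : ℝ)) ^ 2 = ((1 : ℤ) : ℝ) := by
        rw [← hs]; push_cast; ring
      simpa using this
    · simp [h]
  -- degree as a sum of b²
  have hdegsum : ∀ σ : {σ // σ ∈ faces K k},
      (degS K σ.1 : ℝ) = ∑ τ ∈ cof, (b σ τ) ^ 2 := by
    intro σ
    rw [Finset.sum_congr rfl (hbsq σ), ← Finset.sum_filter, Finset.sum_const,
      nsmul_eq_mul, mul_one]
    norm_cast
    rw [degS, hcof, Finset.filter_filter]
    congr 1
    apply Finset.filter_congr
    intro τ _
    rw [hcardσ σ]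
    tauto
  -- deg σ * M σ σ' = ∑_τ b σ τ * b σ' τ
  have hM : ∀ σ σ' : {σ // σ ∈ faces K k},
      (degS K σ.1 : ℝ) * upLapMatrix K k σ σ' = ∑ τ ∈ cof, b σ τ * b σ' τ := by
    intro σ σ'
    by_cases h : σ = σ'
    · subst h
      simp only [upLapMatrix, if_true, mul_one]
      rw [hdegsum σ]
      exact Finset.sum_congr rfl fun τ _ => by ring
    · have hd : (degS K σ.1 : ℝ) ≠ 0 := by
        exact_mod_cast (hdeg σ.1 σ.2).ne'
      rw [upLapMatrix]
      simp only [h, if_false]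
      rw [← mul_assoc, mul_inv_cancel₀ hd, one_mul]
      have e : ∀ τ ∈ cof, b σ τ * b σ' τ =
          if σ.1 ⊆ τ ∧ σ'.1 ⊆ τ then (sgnZ σ.1 τ : ℝ) * (sgnZ σ'.1 τ : ℝ) else 0 := by
        intro τ _
        rw [hb]
        by_cases h1 : σ.1 ⊆ τ <;> by_cases h2 : σ'.1 ⊆ τ <;> simp [h1, h2]
      rw [Finset.sum_congr rfl e, ← Finset.sum_filter, hcof, Finset.filter_filter]
  set N : ℝ := ∑ σ : {σ // σ ∈ faces K k}, (degS K σ.1 : ℝ) * v σ ^ 2 with hN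
  set Q : ℝ := ∑ τ ∈ cof, (∑ σ : {σ // σ ∈ faces K k}, b σ τ * v σ) ^ 2 with hQ
  have step1 : ∀ σ : {σ // σ ∈ faces K k},
      (degS K σ.1 : ℝ) * ((upLapMatrix K k).mulVec v σ) =
      ∑ τ ∈ cof, b σ τ * (∑ σ' : {σ // σ ∈ faces K k}, b σ' τ * v σ') := by
    intro σ
    rw [Matrix.mulVec, dotProduct, Finset.mul_sum]
    calc ∑ σ' : {σ // σ ∈ faces K k}, (degS K σ.1 : ℝ) * (upLapMatrix K k σ σ' * v σ')
        = ∑ σ' : {σ // σ ∈ faces K k}, ∑ τ ∈ cof, b σ τ * (b σ' τ * v σ') := by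
          refine Finset.sum_congr rfl fun σ' _ => ?_
          rw [← mul_assoc, hM σ σ', Finset.sum_mul]
          exact Finset.sum_congr rfl fun τ _ => by ring
      _ = ∑ τ ∈ cof, ∑ σ' : {σ // σ ∈ faces K k}, b σ τ * (b σ' τ * v σ') :=
          Finset.sum_comm
      _ = ∑ τ ∈ cof, b σ τ * ∑ σ' : {σ // σ ∈ faces K k}, b σ' τ * v σ' := by
          exact Finset.sum_congr rfl fun τ _ => (Finset.mul_sum _ _ _).symm
  have hmain : μ * N = Q := by
    calc μ * N = ∑ σ : {σ // σ ∈ faces K k},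
        ((degS K σ.1 : ℝ) * ((upLapMatrix K k).mulVec v σ)) * v σ := by
          rw [hN, Finset.mul_sum]
          exact Finset.sum_congr rfl fun σ _ => by rw [hvec σ]; ring
      _ = ∑ σ : {σ // σ ∈ faces K k},
          (∑ τ ∈ cof, b σ τ * (∑ σ' : {σ // σ ∈ faces K k}, b σ' τ * v σ')) * v σ := by
          exact Finset.sum_congr rfl fun σ _ => by rw [step1 σ]
      _ = ∑ σ : {σ // σ ∈ faces K k}, ∑ τ ∈ cof,
          (b σ τ * (∑ σ' : {σ // σ ∈ faces K k}, b σ' τ * v σ')) * v σ := by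
          exact Finset.sum_congr rfl fun σ _ => Finset.sum_mul _ _ _
      _ = ∑ τ ∈ cof, ∑ σ : {σ // σ ∈ faces K k},
          (b σ τ * (∑ σ' : {σ // σ ∈ faces K k}, b σ' τ * v σ')) * v σ :=
          Finset.sum_comm
      _ = ∑ τ ∈ cof, (∑ σ' : {σ // σ ∈ faces K k}, b σ' τ * v σ') *
          (∑ σ : {σ // σ ∈ faces K k}, b σ τ * v σ) := by
          refine Finset.sum_congr rfl fun τ _ => ?_
          rw [Finset.mul_sum]
          exact Finset.sum_congr rfl fun σ _ => by ring
      _ = Q := by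
          rw [hQ]
          exact Finset.sum_congr rfl fun τ _ => by rw [sq]
  have hQ0 : 0 ≤ Q := Finset.sum_nonneg fun τ _ => sq_nonneg _
  have hNpos : 0 < N := by
    obtain ⟨σ0, hσ0⟩ := Function.ne_iff.mp hv0
    have hσ0' : v σ0 ≠ 0 := by simpa using hσ0
    have h1 : 0 < (degS K σ0.1 : ℝ) * v σ0 ^ 2 := by
      have hd := hdeg σ0.1 σ0.2
      have : (0:ℝ) < (degS K σ0.1 : ℝ) := by exact_mod_cast hd
      have h2 : 0 < v σ0 ^ 2 := by positivity
      exact mul_pos this h2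
    refine lt_of_lt_of_le h1 ?_
    rw [hN]
    exact Finset.single_le_sum
      (f := fun σ : {σ // σ ∈ faces K k} => (degS K σ.1 : ℝ) * v σ ^ 2)
      (fun σ _ => by positivity) (Finset.mem_univ σ0)
  have hQle : Q ≤ ((k:ℝ) + 2) * N := by
    have hτb : ∀ τ ∈ cof, (∑ σ : {σ // σ ∈ faces K k}, b σ τ * v σ) ^ 2 ≤
        ((k:ℝ)+2) * ∑ σ : {σ // σ ∈ faces K k}, (b σ τ)^2 * v σ ^ 2 := by
      intro τ hτc
      set s : Finset {σ // σ ∈ faces K k} :=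
        Finset.univ.filter (fun σ : {σ // σ ∈ faces K k} => σ.1 ⊆ τ) with hs
      have e1 : ∑ σ : {σ // σ ∈ faces K k}, b σ τ * v σ = ∑ σ ∈ s, b σ τ * v σ := by
        rw [hs, Finset.sum_filter]
        refine Finset.sum_congr rfl fun σ _ => ?_
        rw [hb]
        by_cases h : σ.1 ⊆ τ <;> simp [h]
      have e2 : ∑ σ : {σ // σ ∈ faces K k}, (b σ τ)^2 * v σ ^ 2 = ∑ σ ∈ s, v σ ^ 2 := by
        rw [hs, Finset.sum_filter]
        refine Finset.sum_congr rfl fun σ _ => ?_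
        rw [hbsq σ τ hτc]
        by_cases h : σ.1 ⊆ τ <;> simp [h]
      have e3 : ∑ σ ∈ s, (b σ τ)^2 = (s.card : ℝ) := by
        have h1 : ∀ σ ∈ s, (b σ τ)^2 = 1 := fun σ hσ => by
          rw [hbsq σ τ hτc, if_pos (Finset.mem_filter.mp hσ).2]
        rw [Finset.sum_congr rfl h1, Finset.sum_const, nsmul_eq_mul, mul_one]
      have e4 : (s.card : ℝ) ≤ (k:ℝ) + 2 := by
        have hcn : s.card ≤ k + 2 := by
          have hmaps : ∀ σ ∈ s, σ.1 ∈ τ.powersetCard (k+1) := by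
            intro σ hσ
            rw [Finset.mem_powersetCard]
            exact ⟨(Finset.mem_filter.mp hσ).2, hcardσ σ⟩
          calc s.card ≤ (τ.powersetCard (k+1)).card :=
                Finset.card_le_card_of_injOn _ hmaps (fun a _ c _ h => Subtype.ext h)
            _ = (k+2).choose (k+1) := by
                rw [Finset.card_powersetCard, (Finset.mem_filter.mp hτc).2]
            _ = k + 2 := Nat.choose_succ_self_right _
        exact_mod_cast hcn
      calc (∑ σ : {σ // σ ∈ faces K k}, b σ τ * v σ)^2
          = (∑ σ ∈ s, b σ τ * v σ)^2 := by rw [e1]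
        _ ≤ (∑ σ ∈ s, (b σ τ)^2) * ∑ σ ∈ s, v σ ^2 :=
            Finset.sum_mul_sq_le_sq_mul_sq s _ _
        _ ≤ ((k:ℝ)+2) * ∑ σ ∈ s, v σ ^2 := by
            refine mul_le_mul_of_nonneg_right ?_
              (Finset.sum_nonneg fun _ _ => sq_nonneg _)
            rw [e3]; exact e4
        _ = ((k:ℝ)+2) * ∑ σ : {σ // σ ∈ faces K k}, (b σ τ)^2 * v σ^2 := by rw [e2]
    calc Q ≤ ∑ τ ∈ cof, ((k:ℝ)+2) * ∑ σ : {σ // σ ∈ faces K k}, (b σ τ)^2 * v σ^2 :=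
          Finset.sum_le_sum hτb
      _ = ((k:ℝ)+2) * ∑ τ ∈ cof, ∑ σ : {σ // σ ∈ faces K k}, (b σ τ)^2 * v σ^2 :=
          (Finset.mul_sum _ _ _).symm
      _ = ((k:ℝ)+2) * ∑ σ : {σ // σ ∈ faces K k}, (∑ τ ∈ cof, (b σ τ)^2) * v σ^2 := by
          rw [Finset.sum_comm]
          congr 1
          exact Finset.sum_congr rfl fun σ _ => (Finset.sum_mul _ _ _).symm
      _ = ((k:ℝ)+2) * N := by
          rw [hN]
          congr 1
          exact Finset.sum_congr rfl fun σ _ => by rw [← hdegsum σ]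
  constructor
  · nlinarith [hmain, hQ0, hNpos]
  · nlinarith [hmain, hQle, hNpos]
end

section
/- Let Σ be a finite abstract simplicial complex on a linearly ordered vertex set and k ≥ 0 with deg σ > 0 for all σ ∈ Σ_k. Then Δ_k^up = (k+1)·Δ_{(Γ_k,s)} − k·Id as operators on functions Σ_k → ℝ; consequently, μ is an eigenvalue of Δ_k^up with multiplicity m if and only if (μ + k)/(k+1) is an eigenvalue of Δ_{(Γ_k,s)} with multiplicity m. -/
open scoped BigOperators

/-- The matrix of the normalized Laplacian `Δ_{(Γ_k,s)}` of the signed graph associated with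
`Σ_k`: vertices are the `k`-simplices, two distinct ones adjacent iff they share a cofacet
`τ ∈ Σ_{k+1}`, with sign `s(σ,σ') = −sgn([σ],∂[τ])·sgn([σ'],∂[τ])`, and the degree of `σ` in
`Γ_k` is `(k+1)·deg σ`. -/
noncomputable def signedLapMatrix {U : Type*} [LinearOrder U] (K : Finset (Finset U))
    (k : ℕ) : Matrix {σ // σ ∈ faces K k} {σ // σ ∈ faces K k} ℝ :=
  fun σ σ' =>
    if σ = σ' then 1
    else -((((k : ℝ) + 1) * (degS K σ.1 : ℝ))⁻¹ *
      ∑ τ ∈ K.filter (fun τ => τ.card = k + 2 ∧ σ.1 ⊆ τ ∧ σ'.1 ⊆ τ),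
        -((sgnZ σ.1 τ : ℝ) * (sgnZ σ'.1 τ : ℝ)))

theorem Module.End.eigenspace_smul_sub_smul_one {K V : Type*} [Field K] [AddCommGroup V]
    [Module K V] (f : Module.End K V) {c : K} (hc : c ≠ 0) (d μ : K) :
    (c • f - d • 1).eigenspace μ = f.eigenspace ((μ + d) / c) := by
  rw [Module.End.eigenspace_def, Module.End.eigenspace_div f _ _ hc,
    Algebra.algebraMap_eq_smul_one, add_smul, sub_sub, add_comm]

theorem Matrix.mulVecLin_smul_sub_smul_one {n R : Type*} [Fintype n] [DecidableEq n]
    [CommRing R] (A : Matrix n n R) (c d : R) :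
    (c • A - d • 1).mulVecLin = c • A.mulVecLin - d • 1 := by
  rw [← Matrix.toLin'_apply', map_sub, map_smul, map_smul, Matrix.toLin'_one,
    Matrix.toLin'_apply', Module.End.one_eq_id]

theorem upLapMatrix_eq_smul_signedLapMatrix_sub {U : Type*} [LinearOrder U]
    (K : Finset (Finset U)) (k : ℕ) :
    upLapMatrix K k = ((k : ℝ) + 1) • signedLapMatrix K k - (k : ℝ) • 1 := by
  ext σ σ'
  simp only [upLapMatrix, signedLapMatrix, Matrix.sub_apply, Matrix.smul_apply,
    Matrix.one_apply, smul_eq_mul]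
  by_cases h : σ = σ'
  · simp only [h, if_true]
    ring
  · simp only [h, if_false, mul_zero, sub_zero, Finset.sum_neg_distrib, mul_inv]
    field_simp

theorem stmt15_general {U : Type*} [LinearOrder U] (K : Finset (Finset U))
    (k : ℕ) :
    upLapMatrix K k = ((k : ℝ) + 1) • signedLapMatrix K k - (k : ℝ) • 1 ∧
      ∀ (μ : ℝ) (m : ℕ),
        (Module.End.HasEigenvalue (upLapMatrix K k).mulVecLin μ ∧
            Module.finrank ℝ
              (Module.End.eigenspace (upLapMatrix K k).mulVecLin μ) = m) ↔
          (Module.End.HasEigenvalue (signedLapMatrix K k).mulVecLin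
              ((μ + (k : ℝ)) / ((k : ℝ) + 1)) ∧
            Module.finrank ℝ
              (Module.End.eigenspace (signedLapMatrix K k).mulVecLin
                ((μ + (k : ℝ)) / ((k : ℝ) + 1))) = m) := by
  have hmat := upLapMatrix_eq_smul_signedLapMatrix_sub K k
  refine ⟨hmat, fun μ m => ?_⟩
  have hE : Module.End.eigenspace (upLapMatrix K k).mulVecLin μ =
      Module.End.eigenspace (signedLapMatrix K k).mulVecLin ((μ + k) / (k + 1)) := by
    rw [hmat, Matrix.mulVecLin_smul_sub_smul_one,
      Module.End.eigenspace_smul_sub_smul_one _ (by positivity)]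
  rw [Module.End.hasEigenvalue_iff, Module.End.hasEigenvalue_iff, hE]

/-- `Δ_k^up = (k+1)·Δ_{(Γ_k,s)} − k·Id`; consequently `μ` is an eigenvalue of `Δ_k^up` with
multiplicity `m` iff `(μ+k)/(k+1)` is an eigenvalue of `Δ_{(Γ_k,s)}` with multiplicity `m`. -/
theorem stmt15 {U : Type*} [LinearOrder U] (K : Finset (Finset U))
    (hK : IsSimplicialComplex K) (k : ℕ)
    (hdeg : ∀ σ ∈ faces K k, 0 < degS K σ) :
    upLapMatrix K k = ((k : ℝ) + 1) • signedLapMatrix K k - (k : ℝ) • 1 ∧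
      ∀ (μ : ℝ) (m : ℕ),
        (Module.End.HasEigenvalue (upLapMatrix K k).mulVecLin μ ∧
            Module.finrank ℝ
              (Module.End.eigenspace (upLapMatrix K k).mulVecLin μ) = m) ↔
          (Module.End.HasEigenvalue (signedLapMatrix K k).mulVecLin
              ((μ + (k : ℝ)) / ((k : ℝ) + 1)) ∧
            Module.finrank ℝ
              (Module.End.eigenspace (signedLapMatrix K k).mulVecLin
                ((μ + (k : ℝ)) / ((k : ℝ) + 1))) = m) :=
  stmt15_general K k
end

section
/- Let Σ be a finite abstract simplicial complex of dimension n on a linearly ordered vertex set, and let f : Σ → ℕ be a discrete Morse function with m_k critical k-simplices, 0 ≤ k ≤ n. Then the Morse inequalities hold: m_k ≥ b_k for every k, and Σ_{k=0}^n (−1)^k m_k = Σ_{k=0}^n (−1)^k b_k, where b_k is the k-th Betti number of Σ with real coefficients. -/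
open scoped BigOperators

/-- The matrix of the real coboundary `δ_k`:
`(δ_k φ)(τ) = Σ_{σ facet of τ} sgn([σ],∂[τ]) φ(σ)`. -/
noncomputable def cobMatrix {U : Type*} [LinearOrder U] (K : Finset (Finset U)) (k : ℕ) :
    Matrix {τ // τ ∈ faces K (k + 1)} {σ // σ ∈ faces K k} ℝ :=
  fun τ σ => if σ.1 ⊆ τ.1 then (sgnZ σ.1 τ.1 : ℝ) else 0

/-- The `k`-th Betti number with real coefficients:
`b_k = dim ker δ_k − dim image δ_{k−1}` (with `δ_{−1} := 0`). -/
noncomputable def betti {U : Type*} [LinearOrder U] (K : Finset (Finset U)) : ℕ → ℕ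
  | 0 => Module.finrank ℝ (LinearMap.ker (cobMatrix K 0).mulVecLin)
  | (k + 1) => Module.finrank ℝ (LinearMap.ker (cobMatrix K (k + 1)).mulVecLin) -
      Module.finrank ℝ (LinearMap.range (cobMatrix K k).mulVecLin)

/-- A discrete Morse function: for every simplex `σ` there is at most one cofacet `ρ ⊃ σ` with
`f(ρ) ≤ f(σ)` and at most one facet `τ ⊂ σ` with `f(τ) ≥ f(σ)`. -/
def IsDiscreteMorse {U : Type*} [LinearOrder U] (K : Finset (Finset U))
    (f : Finset U → ℕ) : Prop :=
  ∀ σ ∈ K,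
    (K.filter fun ρ => σ ⊆ ρ ∧ ρ.card = σ.card + 1 ∧ f ρ ≤ f σ).card ≤ 1 ∧
    (K.filter fun τ => τ ⊆ σ ∧ τ.card + 1 = σ.card ∧ f σ ≤ f τ).card ≤ 1

/-- The critical `k`-simplices of a discrete Morse function: those `σ ∈ Σ_k` having no cofacet
`ρ ⊃ σ` with `f(ρ) ≤ f(σ)` and no facet `τ ⊂ σ` with `f(τ) ≥ f(σ)`. -/
def criticals {U : Type*} [LinearOrder U] (K : Finset (Finset U)) (f : Finset U → ℕ)
    (k : ℕ) : Finset (Finset U) :=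
  (faces K k).filter fun σ =>
    (K.filter fun ρ => σ ⊆ ρ ∧ ρ.card = σ.card + 1 ∧ f ρ ≤ f σ) = ∅ ∧
    (K.filter fun τ => τ ⊆ σ ∧ τ.card + 1 = σ.card ∧ f σ ≤ f τ) = ∅

/-!
Call `σ ⊂ ρ` (a facet) a gradient pair when `f ρ ≤ f σ`. Forman's lemma says these pairs form a
matching on the non-critical simplices, so `|Σ_k| = m_k + u_k + u_{k-1}`, where `u_k` counts the
`k`-simplices paired with a `(k+1)`-simplex. Ordered by `f`, the columns of `δ_k` at these
simplices are triangular with `±1` pivots in the rows of their partners, hence `u_k ≤ rank δ_k`.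
Since `δ_{k+1} δ_k = 0`, `b_k = |Σ_k| - rank δ_k - rank δ_{k-1} ≤ m_k`, and both alternating sums
telescope to `Σ (-1)^k |Σ_k|`.
-/

theorem linearIndependent_of_pivots {ι m R : Type*} [Fintype ι] [Ring R] [NoZeroDivisors R]
    (v : ι → m → R) (p : ι → m) (w : ι → ℕ) (hpiv : ∀ i, v i (p i) ≠ 0)
    (htri : ∀ i j, j ≠ i → v j (p i) ≠ 0 → w j < w i) : LinearIndependent R v := by
  classical
  rw [Fintype.linearIndependent_iff]
  intro g hg
  by_contra! hsupp
  obtain ⟨i, hi, hmin⟩ := Finset.exists_min_image {j | g j ≠ 0} w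
    (by simpa [Finset.filter_nonempty_iff] using hsupp)
  have hi : g i ≠ 0 := (Finset.mem_filter.mp hi).2
  -- at the pivot row of the `w`-minimal column in the support only that column survives
  have hrow : ∑ j, g j * v j (p i) = g i * v i (p i) := by
    refine Fintype.sum_eq_single i fun j hj => ?_
    by_cases hgj : g j = 0
    · rw [hgj, zero_mul]
    · have hwj : w i ≤ w j := hmin j (by simp [hgj])
      rw [of_not_not (mt (htri i j hj) hwj.not_gt), mul_zero]
  have := congrFun hg (p i)
  simp only [Finset.sum_apply, Pi.smul_apply, smul_eq_mul, Pi.zero_apply, hrow] at this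
  exact mul_ne_zero hi (hpiv i) this

theorem sum_range_alternating_eq_of_telescoping {R : Type*} [CommRing R] {a c g : ℕ → R}
    {n : ℕ} (h0 : a 0 + g 0 = c 0) (hsucc : ∀ k, a (k + 1) + g (k + 1) + g k = c (k + 1))
    (hn : g n = 0) :
    ∑ k ∈ Finset.range (n + 1), (-1) ^ k * a k = ∑ k ∈ Finset.range (n + 1), (-1) ^ k * c k := by
  suffices ∀ n, ∑ k ∈ Finset.range (n + 1), (-1) ^ k * a k
      = ∑ k ∈ Finset.range (n + 1), (-1) ^ k * c k - (-1) ^ n * g n by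
    simp [this n, hn]
  intro n
  induction n with
  | zero => simp [← h0]
  | succ n ih =>
    rw [Finset.sum_range_succ, ih, Finset.sum_range_succ _ (n + 1), ← hsucc]
    ring

section Morse

variable {U : Type*} [LinearOrder U] (K : Finset (Finset U)) (f : Finset U → ℕ)

def cofacetsBelow (σ : Finset U) : Finset (Finset U) :=
  K.filter fun ρ => σ ⊆ ρ ∧ ρ.card = σ.card + 1 ∧ f ρ ≤ f σ

def facetsAbove (σ : Finset U) : Finset (Finset U) :=
  K.filter fun τ => τ ⊆ σ ∧ τ.card + 1 = σ.card ∧ f σ ≤ f τ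

def pairedUp (k : ℕ) : Finset (Finset U) :=
  (faces K k).filter fun σ => (cofacetsBelow K f σ).Nonempty

def pairedDown (k : ℕ) : Finset (Finset U) :=
  (faces K k).filter fun σ => (facetsAbove K f σ).Nonempty

/-- The simplex matched with `σ` by the gradient vector field of `f` (junk value `σ` if none). -/
noncomputable def partner (σ : Finset U) : Finset U :=
  if h : (cofacetsBelow K f σ).Nonempty then h.choose else σ

variable {K f}

theorem mem_facetsAbove_iff {σ ρ : Finset U} (hσ : σ ∈ K) (hρ : ρ ∈ K) :
    σ ∈ facetsAbove K f ρ ↔ ρ ∈ cofacetsBelow K f σ := by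
  simp only [facetsAbove, cofacetsBelow, Finset.mem_filter, hσ, hρ, true_and]
  constructor <;> rintro ⟨hsub, hcard, hle⟩ <;> exact ⟨hsub, by omega, hle⟩

theorem mem_faces_succ_of_mem_cofacetsBelow {k : ℕ} {σ ρ : Finset U} (hσ : σ ∈ faces K k)
    (hρ : ρ ∈ cofacetsBelow K f σ) : ρ ∈ faces K (k + 1) := by
  simp only [faces, cofacetsBelow, Finset.mem_filter] at hσ hρ ⊢
  exact ⟨hρ.1, by omega⟩

variable (hf : IsDiscreteMorse K f)
include hf

theorem IsDiscreteMorse.eq_of_mem_cofacetsBelow {σ ρ ρ' : Finset U} (hσ : σ ∈ K)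
    (hρ : ρ ∈ cofacetsBelow K f σ) (hρ' : ρ' ∈ cofacetsBelow K f σ) : ρ = ρ' :=
  Finset.card_le_one.mp (hf σ hσ).1 ρ hρ ρ' hρ'

theorem IsDiscreteMorse.eq_of_mem_facetsAbove {σ σ' ρ : Finset U} (hρ : ρ ∈ K)
    (hσ : σ ∈ facetsAbove K f ρ) (hσ' : σ' ∈ facetsAbove K f ρ) : σ = σ' :=
  Finset.card_le_one.mp (hf ρ hρ).2 σ hσ σ' hσ'

/-- Forman: no simplex is both the smaller and the larger end of a pair of the gradient field. -/
theorem IsDiscreteMorse.facetsAbove_eq_empty (hK : IsSimplicialComplex K) {σ : Finset U}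
    (hσ : σ ∈ K) (hup : (cofacetsBelow K f σ).Nonempty) : facetsAbove K f σ = ∅ := by
  obtain ⟨ρ, hρ⟩ := hup
  refine Finset.eq_empty_of_forall_notMem fun τ hτ => ?_
  have hρ' := hρ
  simp only [cofacetsBelow, facetsAbove, Finset.mem_filter] at hρ hτ
  obtain ⟨hρK, hσρ, hρcard, hfρ⟩ := hρ
  obtain ⟨hτK, hτσ, hτcard, hfτ⟩ := hτ
  obtain ⟨a, haτ, rfl⟩ := Finset.exists_eq_insert_iff.mpr ⟨hτσ, hτcard⟩
  obtain ⟨b, hbσ, rfl⟩ := Finset.exists_eq_insert_iff.mpr ⟨hσρ, hρcard.symm⟩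
  -- `insert b τ` is a second facet of `ρ` and a second cofacet of `τ`
  have hbτ : b ∉ τ := fun h => hbσ (Finset.mem_insert_of_mem h)
  have hne : insert b τ ≠ insert a τ := fun h => hbσ (h ▸ Finset.mem_insert_self b τ)
  have hsub : insert b τ ⊆ insert b (insert a τ) :=
    Finset.insert_subset_insert b (Finset.subset_insert a τ)
  have hK' : insert b τ ∈ K := hK.2 _ hρK _ hsub (Finset.insert_nonempty b τ)
  have hcard : (insert b τ).card = τ.card + 1 := Finset.card_insert_of_notMem hbτ
  have hlt : f τ < f (insert b τ) := by
    by_contra! hle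
    refine hne (hf.eq_of_mem_cofacetsBelow hτK ?_ ?_) <;>
      simp only [cofacetsBelow, Finset.mem_filter]
    · exact ⟨hK', Finset.subset_insert b τ, hcard, hle⟩
    · exact ⟨hσ, Finset.subset_insert a τ, hτcard.symm, hfτ⟩
  refine hne (hf.eq_of_mem_facetsAbove hρK ?_ ((mem_facetsAbove_iff hσ hρK).mpr hρ'))
  simp only [facetsAbove, Finset.mem_filter]
  exact ⟨hK', hsub, by omega, by omega⟩

end Morse

section Gradient

variable {U : Type*} [LinearOrder U] {K : Finset (Finset U)} {f : Finset U → ℕ}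

theorem IsDiscreteMorse.card_faces_eq (hK : IsSimplicialComplex K) (hf : IsDiscreteMorse K f)
    (k : ℕ) : (faces K k).card =
      (criticals K f k).card + (pairedUp K f k).card + (pairedDown K f k).card := by
  have hcrit : criticals K f k =
      (faces K k).filter fun σ => cofacetsBelow K f σ = ∅ ∧ facetsAbove K f σ = ∅ := rfl
  rw [hcrit, pairedUp, pairedDown, Finset.card_filter, Finset.card_filter,
    Finset.card_filter, ← Finset.sum_add_distrib, ← Finset.sum_add_distrib,
    Finset.card_eq_sum_ones]
  refine Finset.sum_congr rfl fun σ hσ => ?_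
  by_cases hup : (cofacetsBelow K f σ).Nonempty
  · have hdown := hf.facetsAbove_eq_empty hK (Finset.mem_of_mem_filter σ hσ) hup
    simp [hdown, hup.ne_empty, hup]
  · simp only [Finset.not_nonempty_iff_eq_empty] at hup
    by_cases hdown : facetsAbove K f σ = ∅ <;> simp [hup, hdown, Finset.nonempty_iff_ne_empty]

theorem partner_mem_cofacetsBelow {k : ℕ} {σ : Finset U} (hσ : σ ∈ pairedUp K f k) :
    partner K f σ ∈ cofacetsBelow K f σ := by
  have hup := (Finset.mem_filter.mp hσ).2
  rw [partner, dif_pos hup]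
  exact hup.choose_spec

theorem subset_partner {k : ℕ} {σ : Finset U} (hσ : σ ∈ pairedUp K f k) :
    σ ⊆ partner K f σ :=
  (Finset.mem_filter.mp (partner_mem_cofacetsBelow hσ)).2.1

theorem partner_mem_pairedDown {k : ℕ} {σ : Finset U} (hσ : σ ∈ pairedUp K f k) :
    partner K f σ ∈ pairedDown K f (k + 1) := by
  have hσf := (Finset.mem_filter.mp hσ).1
  have hρ := partner_mem_cofacetsBelow hσ
  have hρf := mem_faces_succ_of_mem_cofacetsBelow hσf hρ
  exact Finset.mem_filter.mpr ⟨hρf, σ, (mem_facetsAbove_iff (Finset.mem_of_mem_filter σ hσf)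
    (Finset.mem_of_mem_filter _ hρf)).mpr hρ⟩

/-- Acyclicity of the gradient field; it makes `δ_k` triangular on the columns `pairedUp K f k`. -/
theorem IsDiscreteMorse.lt_of_subset_partner (hf : IsDiscreteMorse K f) {k : ℕ} {σ σ' : Finset U}
    (hσ : σ ∈ pairedUp K f k) (hσ' : σ' ∈ pairedUp K f k) (hne : σ' ≠ σ)
    (hsub : σ' ⊆ partner K f σ) : f σ' < f σ := by
  by_contra! hle
  have hρ := partner_mem_cofacetsBelow hσ
  have hρK := Finset.mem_of_mem_filter _ hρ
  have hσf := (Finset.mem_filter.mp hσ).1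
  have hσ'f := (Finset.mem_filter.mp hσ').1
  refine hne (hf.eq_of_mem_facetsAbove hρK ?_
    ((mem_facetsAbove_iff (Finset.mem_of_mem_filter σ hσf) hρK).mpr hρ))
  simp only [faces, cofacetsBelow, facetsAbove, Finset.mem_filter] at hρ hσf hσ'f ⊢
  exact ⟨hσ'f.1, hsub, by omega, by omega⟩

theorem IsDiscreteMorse.card_pairedUp_eq (hf : IsDiscreteMorse K f) (k : ℕ) :
    (pairedUp K f k).card = (pairedDown K f (k + 1)).card := by
  refine Finset.card_bij (fun σ _ => partner K f σ) (fun σ hσ => partner_mem_pairedDown hσ)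
    (fun σ hσ σ' hσ' heq => ?_) (fun ρ hρ => ?_)
  · by_contra hne
    have h₁ := hf.lt_of_subset_partner hσ hσ' (Ne.symm hne) (heq ▸ subset_partner hσ')
    have h₂ := hf.lt_of_subset_partner hσ' hσ hne (heq ▸ subset_partner hσ)
    omega
  · obtain ⟨hρf, τ, hτ⟩ := Finset.mem_filter.mp hρ
    have hρK := Finset.mem_of_mem_filter ρ hρf
    have hτK := Finset.mem_of_mem_filter τ hτ
    have hρτ := (mem_facetsAbove_iff hτK hρK).mp hτ
    have hτp : τ ∈ pairedUp K f k := by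
      simp only [pairedUp, faces, facetsAbove, Finset.mem_filter] at hτ hρf ⊢
      exact ⟨⟨hτK, by omega⟩, ρ, hρτ⟩
    exact ⟨τ, hτp, hf.eq_of_mem_cofacetsBelow hτK (partner_mem_cofacetsBelow hτp) hρτ⟩

theorem IsSimplicialComplex.pairedDown_zero (hK : IsSimplicialComplex K) :
    pairedDown K f 0 = ∅ := by
  refine Finset.eq_empty_of_forall_notMem fun σ hσ => ?_
  obtain ⟨hσf, τ, hτ⟩ := Finset.mem_filter.mp hσ
  simp only [faces, facetsAbove, Finset.mem_filter] at hσf hτ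
  exact (hK.1 τ hτ.1).ne_empty (Finset.card_eq_zero.mp (by omega))

end Gradient

section Coboundary

variable {U : Type*} [LinearOrder U]

theorem exists_eq_insert_insert {σ ρ : Finset U} (h : σ ⊆ ρ) (hcard : ρ.card = σ.card + 2) :
    ∃ a b, a ≠ b ∧ a ∉ σ ∧ b ∉ σ ∧ insert a (insert b σ) = ρ := by
  obtain ⟨a, b, hab, hd⟩ := Finset.card_eq_two.mp
    (show (ρ \ σ).card = 2 by rw [Finset.card_sdiff_of_subset h]; omega)
  have hσ : ∀ x, x ∈ ρ \ σ → x ∉ σ := fun x hx => (Finset.mem_sdiff.mp hx).2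
  refine ⟨a, b, hab, hσ a (by simp [hd]), hσ b (by simp [hd]), ?_⟩
  rw [← Finset.sdiff_union_of_subset h, hd, Finset.insert_union, Finset.singleton_union]

theorem sgnZ_insert {σ : Finset U} {a : U} (ha : a ∉ σ) :
    sgnZ σ (insert a σ) = (-1) ^ (σ.filter (· < a)).card := by
  rw [sgnZ, Finset.insert_sdiff_cancel ha, Finset.sum_singleton, Finset.filter_insert,
    if_neg (lt_irrefl a)]

theorem sgnZ_ne_zero {σ τ : Finset U} (h : σ ⊆ τ) (hcard : σ.card + 1 = τ.card) :
    sgnZ σ τ ≠ 0 := by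
  obtain ⟨a, ha, rfl⟩ := Finset.exists_eq_insert_iff.mpr ⟨h, hcard⟩
  rw [sgnZ_insert ha]
  exact pow_ne_zero _ (by norm_num)

/-- Only one of the two insertion orders counts the smaller of `a`, `b` below the larger one, so
the two exponents differ by one. -/
theorem sgnZ_mul_sgnZ_add_sgnZ_mul_sgnZ {σ : Finset U} {a b : U} (hab : a ≠ b) (ha : a ∉ σ)
    (hb : b ∉ σ) :
    sgnZ (insert b σ) (insert a (insert b σ)) * sgnZ σ (insert b σ) +
      sgnZ (insert a σ) (insert b (insert a σ)) * sgnZ σ (insert a σ) = 0 := by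
  rw [sgnZ_insert ha, sgnZ_insert hb, sgnZ_insert (by simp [hab, ha]),
    sgnZ_insert (by simp [hab.symm, hb]), Finset.filter_insert, Finset.filter_insert]
  rcases hab.lt_or_gt with h | h
  · rw [if_pos h, if_neg h.not_gt, Finset.card_insert_of_notMem (by simp [ha])]
    ring
  · rw [if_neg h.not_gt, if_pos h, Finset.card_insert_of_notMem (by simp [hb])]
    ring

theorem IsSimplicialComplex.cobMatrix_mul_cobMatrix {K : Finset (Finset U)}
    (hK : IsSimplicialComplex K) (k : ℕ) : cobMatrix K (k + 1) * cobMatrix K k = 0 := by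
  ext ρ σ
  rw [Matrix.mul_apply, Matrix.zero_apply]
  have hρ := Finset.mem_filter.mp ρ.2
  have hσ := Finset.mem_filter.mp σ.2
  by_cases hσρ : σ.1 ⊆ ρ.1
  swap
  · refine Finset.sum_eq_zero fun τ _ => ?_
    simp only [cobMatrix]
    split_ifs with h₁ h₂
    exacts [absurd (h₂.trans h₁) hσρ, mul_zero _, zero_mul _, zero_mul _]
  obtain ⟨a, b, hab, ha, hb, hρab⟩ := exists_eq_insert_insert hσρ (by omega)
  have hface : ∀ v ∈ ρ.1, v ∉ σ.1 → insert v σ.1 ∈ faces K (k + 1) := fun v hv hvσ =>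
    Finset.mem_filter.mpr ⟨hK.2 _ hρ.1 _ (Finset.insert_subset hv hσρ)
      (Finset.insert_nonempty v _), by rw [Finset.card_insert_of_notMem hvσ, hσ.2]⟩
  let τa : {τ // τ ∈ faces K (k + 1)} := ⟨insert a σ.1, hface a (by simp [← hρab]) ha⟩
  let τb : {τ // τ ∈ faces K (k + 1)} := ⟨insert b σ.1, hface b (by simp [← hρab]) hb⟩
  have hne : τb ≠ τa := fun h => by
    have hba : insert b σ.1 = insert a σ.1 := congrArg Subtype.val h
    have : b ∈ insert a σ.1 := hba ▸ Finset.mem_insert_self b σ.1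
    simp [hab.symm, hb] at this
  rw [Fintype.sum_eq_add τb τa hne ?_]
  · have hτbρ : insert b σ.1 ⊆ ρ.1 := hρab ▸ Finset.subset_insert a _
    have hτaρ : insert a σ.1 ⊆ ρ.1 := hρab ▸ Finset.insert_comm a b σ.1 ▸ Finset.subset_insert b _
    simp only [cobMatrix, τa, τb, if_pos hτbρ, if_pos hτaρ, Finset.subset_insert, if_true]
    rw [← hρab]
    nth_rewrite 2 [Finset.insert_comm]
    exact_mod_cast sgnZ_mul_sgnZ_add_sgnZ_mul_sgnZ hab ha hb
  · rintro τ ⟨hτb, hτa⟩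
    simp only [cobMatrix]
    split_ifs with h₁ h₂
    · obtain ⟨v, hv, hτv⟩ := Finset.exists_eq_insert_iff.mpr
        ⟨h₂, by rw [(Finset.mem_filter.mp τ.2).2, hσ.2]⟩
      have hvab : v = a ∨ v = b := by
        have := h₁ (hτv ▸ Finset.mem_insert_self v σ.1)
        simpa [← hρab, hv] using this
      rcases hvab with rfl | rfl
      exacts [absurd (Subtype.ext hτv.symm) hτa, absurd (Subtype.ext hτv.symm) hτb]
    exacts [mul_zero _, zero_mul _, zero_mul _]

end Coboundary

section Betti

variable {U : Type*} [LinearOrder U] {K : Finset (Finset U)} {f : Finset U → ℕ}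

theorem IsDiscreteMorse.card_pairedUp_le_rank (hf : IsDiscreteMorse K f) (k : ℕ) :
    (pairedUp K f k).card ≤ (cobMatrix K k).rank := by
  let e (σ : pairedUp K f k) : {σ // σ ∈ faces K k} := ⟨σ.1, (Finset.mem_filter.mp σ.2).1⟩
  let p (σ : pairedUp K f k) : {ρ // ρ ∈ faces K (k + 1)} :=
    ⟨partner K f σ.1, (Finset.mem_filter.mp (partner_mem_pairedDown σ.2)).1⟩
  let v (σ : pairedUp K f k) := (cobMatrix K k).col (e σ)
  have hv : LinearIndependent ℝ v := by
    refine linearIndependent_of_pivots v p (fun σ => f σ.1) (fun σ => ?_) (fun σ σ' hne h => ?_)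
    · have hρ := Finset.mem_filter.mp (partner_mem_cofacetsBelow σ.2)
      simp only [v, e, p, Matrix.col_apply, cobMatrix, if_pos hρ.2.1]
      exact_mod_cast sgnZ_ne_zero hρ.2.1 hρ.2.2.1.symm
    · have hsub : σ'.1 ⊆ partner K f σ.1 := by
        by_contra hsub
        simp [v, e, p, cobMatrix, hsub] at h
      exact hf.lt_of_subset_partner σ.2 σ'.2 (Subtype.coe_ne_coe.mpr hne) hsub
  calc (pairedUp K f k).card
      = Module.finrank ℝ (Submodule.span ℝ (Set.range v)) := by
        rw [finrank_span_eq_card hv, Fintype.card_coe]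
    _ ≤ Module.finrank ℝ (Submodule.span ℝ (Set.range (cobMatrix K k).col)) :=
        Submodule.finrank_mono (Submodule.span_mono (Set.range_comp_subset_range _ _))
    _ = (cobMatrix K k).rank := (Matrix.rank_eq_finrank_span_cols _).symm

theorem finrank_ker_cobMatrix_add_rank (K : Finset (Finset U)) (k : ℕ) :
    Module.finrank ℝ (LinearMap.ker (cobMatrix K k).mulVecLin) + (cobMatrix K k).rank =
      (faces K k).card := by
  rw [Matrix.rank, add_comm, LinearMap.finrank_range_add_finrank_ker, Module.finrank_pi,
    Fintype.card_coe]

theorem IsSimplicialComplex.rank_cobMatrix_le_finrank_ker (hK : IsSimplicialComplex K) (k : ℕ) :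
    (cobMatrix K k).rank ≤ Module.finrank ℝ (LinearMap.ker (cobMatrix K (k + 1)).mulVecLin) :=
  Submodule.finrank_mono <| LinearMap.range_le_ker_iff.mpr <| by
    rw [← Matrix.mulVecLin_mul, hK.cobMatrix_mul_cobMatrix, Matrix.mulVecLin_zero]

theorem betti_zero_add_rank (K : Finset (Finset U)) :
    betti K 0 + (cobMatrix K 0).rank = (faces K 0).card :=
  finrank_ker_cobMatrix_add_rank K 0

theorem IsSimplicialComplex.betti_succ_add_rank (hK : IsSimplicialComplex K) (k : ℕ) :
    betti K (k + 1) + (cobMatrix K (k + 1)).rank + (cobMatrix K k).rank =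
      (faces K (k + 1)).card := by
  have := finrank_ker_cobMatrix_add_rank K (k + 1)
  have := hK.rank_cobMatrix_le_finrank_ker k
  simp only [betti, Matrix.rank] at *
  omega

theorem IsDiscreteMorse.card_criticals_zero_add (hK : IsSimplicialComplex K)
    (hf : IsDiscreteMorse K f) :
    (criticals K f 0).card + (pairedUp K f 0).card = (faces K 0).card := by
  rw [hf.card_faces_eq hK, hK.pairedDown_zero, Finset.card_empty, add_zero]

theorem IsDiscreteMorse.card_criticals_succ_add (hK : IsSimplicialComplex K)
    (hf : IsDiscreteMorse K f) (k : ℕ) :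
    (criticals K f (k + 1)).card + (pairedUp K f (k + 1)).card + (pairedUp K f k).card =
      (faces K (k + 1)).card := by
  rw [hf.card_faces_eq hK, hf.card_pairedUp_eq k]

theorem faces_eq_empty_of_card_le {n : ℕ} (hdim : ∀ σ ∈ K, σ.card ≤ n + 1) :
    faces K (n + 1) = ∅ :=
  Finset.filter_false_of_mem fun σ hσ => by have := hdim σ hσ; omega

theorem IsDiscreteMorse.card_pairedUp_eq_zero_of_card_le (hf : IsDiscreteMorse K f) {n : ℕ}
    (hdim : ∀ σ ∈ K, σ.card ≤ n + 1) : (pairedUp K f n).card = 0 := by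
  rw [hf.card_pairedUp_eq, Finset.card_eq_zero, ← Finset.subset_empty,
    ← faces_eq_empty_of_card_le hdim]
  exact Finset.filter_subset _ _

theorem rank_cobMatrix_eq_zero_of_card_le {n : ℕ} (hdim : ∀ σ ∈ K, σ.card ≤ n + 1) :
    (cobMatrix K n).rank = 0 :=
  Nat.le_zero.mp ((Matrix.rank_le_card_height _).trans_eq
    (by simp [faces_eq_empty_of_card_le hdim]))

end Betti

theorem stmt19_general {U : Type*} [LinearOrder U] (K : Finset (Finset U))
    (hK : IsSimplicialComplex K) (n : ℕ)
    (hdim : ∀ σ ∈ K, σ.card ≤ n + 1)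
    (f : Finset U → ℕ) (hf : IsDiscreteMorse K f) :
    (∀ k, betti K k ≤ (criticals K f k).card) ∧
      (∑ k ∈ Finset.range (n + 1), (-1 : ℤ) ^ k * ((criticals K f k).card : ℤ)) =
        ∑ k ∈ Finset.range (n + 1), (-1 : ℤ) ^ k * (betti K k : ℤ) := by
  have hm₀ := hf.card_criticals_zero_add hK
  have hm := hf.card_criticals_succ_add hK
  have hb₀ := betti_zero_add_rank K
  have hb := hK.betti_succ_add_rank
  have hrank := hf.card_pairedUp_le_rank
  refine ⟨fun k => ?_, ?_⟩
  · cases k with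
    | zero => have := hrank 0; omega
    | succ k => have := hm k; have := hb k; have := hrank k; have := hrank (k + 1); omega
  have hup := hf.card_pairedUp_eq_zero_of_card_le hdim
  have hrk := rank_cobMatrix_eq_zero_of_card_le (K := K) hdim
  calc ∑ k ∈ Finset.range (n + 1), (-1 : ℤ) ^ k * ((criticals K f k).card : ℤ)
      = ∑ k ∈ Finset.range (n + 1), (-1 : ℤ) ^ k * ((faces K k).card : ℤ) :=
        sum_range_alternating_eq_of_telescoping (g := fun k => ((pairedUp K f k).card : ℤ))
          (by exact_mod_cast hm₀) (fun k => by exact_mod_cast hm k) (by exact_mod_cast hup)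
    _ = ∑ k ∈ Finset.range (n + 1), (-1 : ℤ) ^ k * (betti K k : ℤ) :=
        (sum_range_alternating_eq_of_telescoping (g := fun k => ((cobMatrix K k).rank : ℤ))
          (by exact_mod_cast hb₀) (fun k => by exact_mod_cast hb k) (by exact_mod_cast hrk)).symm

/-- The discrete Morse inequalities (Forman): `m_k ≥ b_k` for every `k`, and
`Σ_k (−1)^k m_k = Σ_k (−1)^k b_k`. -/
theorem stmt19 {U : Type*} [LinearOrder U] (K : Finset (Finset U))
    (hK : IsSimplicialComplex K) (n : ℕ)
    (hdim_top : (faces K n).Nonempty)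
    (hdim : ∀ σ ∈ K, σ.card ≤ n + 1)
    (f : Finset U → ℕ) (hf : IsDiscreteMorse K f) :
    (∀ k, betti K k ≤ (criticals K f k).card) ∧
      (∑ k ∈ Finset.range (n + 1), (-1 : ℤ) ^ k * ((criticals K f k).card : ℤ)) =
        ∑ k ∈ Finset.range (n + 1), (-1 : ℤ) ^ k * (betti K k : ℤ) :=
  stmt19_general K hK n hdim f hf
end
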